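/- Let v_ok̄ok = (1/2)·(e₍₀,₁₎ − e₍₀,₀₎ − e₍₁,₁₎ + e₍₁,₀₎), the tensor product of |ok̄⟩ = (1/√2)(|h̄⟩ − |t̄⟩) with |ok⟩ = (1/√2)(|z=−1/2⟩ − |z=+1/2⟩). Then the squared modulus of the inner product of v_ok̄ok with Ψ₂ equals 1/12, i.e. ‖⟪v_ok̄ok, Ψ₂⟫‖² = 1/12. -/

import Mathlib

noncomputable def Psi2 : EuclideanSpace ℂ (Fin 2 × Fin 2) :=
  ((1 / Real.sqrt 3 : ℝ) : ℂ) •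
    (EuclideanSpace.single (0, 1) 1 + EuclideanSpace.single (1, 0) 1 +
      EuclideanSpace.single (1, 1) 1)

noncomputable def vOkbarOk : EuclideanSpace ℂ (Fin 2 × Fin 2) :=
  ((1 / 2 : ℝ) : ℂ) •
    (EuclideanSpace.single (0, 1) 1 - EuclideanSpace.single (0, 0) 1 -
      EuclideanSpace.single (1, 1) 1 + EuclideanSpace.single (1, 0) 1)

open scoped InnerProductSpace

theorem norm_inner_ofReal_smul_sq {E : Type*} [SeminormedAddCommGroup E]
    [InnerProductSpace ℂ E] (a b : ℝ) (x y : E) :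
    ‖⟪(a : ℂ) • x, (b : ℂ) • y⟫_ℂ‖ ^ 2 = a ^ 2 * b ^ 2 * ‖⟪x, y⟫_ℂ‖ ^ 2 := by
  rw [inner_smul_left, inner_smul_right, norm_mul, norm_mul, RCLike.norm_conj,
    Complex.norm_real, Complex.norm_real, Real.norm_eq_abs, Real.norm_eq_abs,
    mul_pow, mul_pow, sq_abs, sq_abs, mul_assoc]

theorem prob_okbar_ok : ‖(inner ℂ vOkbarOk Psi2 : ℂ)‖ ^ 2 = 1 / 12 := by
  -- the two sign patterns share the support {(0,1), (1,0), (1,1)} with products 1, 1, -1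
  have overlap : ⟪(EuclideanSpace.single (0, 1) 1 - EuclideanSpace.single (0, 0) 1 -
        EuclideanSpace.single (1, 1) 1 + EuclideanSpace.single (1, 0) 1 :
          EuclideanSpace ℂ (Fin 2 × Fin 2)),
      EuclideanSpace.single (0, 1) 1 + EuclideanSpace.single (1, 0) 1 +
        EuclideanSpace.single (1, 1) 1⟫_ℂ = 1 := by
    simp only [inner_add_left, inner_add_right, inner_sub_left,
      EuclideanSpace.inner_single_right]
    norm_num [Prod.ext_iff]
  rw [vOkbarOk, Psi2, norm_inner_ofReal_smul_sq, overlap]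
  norm_num
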